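/- arXiv:1105.2661 — 3 statements merged into one kernel-verified Lean document; each statement's English description precedes it below -/
import Mathlib

section
/- Let 𝒟 be a dyadic system, φ : 𝒟 → [0,∞) a set function, and suppose there is a constant C ≥ 1 such that whenever P, Q ∈ 𝒟 with P ⊆ Q and φ(P) > 0, one has φ(Q) ≤ Cφ(P), and whenever φ(P) = 0 then P has no proper dyadic subcubes (each child of P equals P). For a positive integer m and f ≥ 0 define T_m(f dσ)(x) = Σ_{k∈ℤ} φ(Q^k(x)) ∫_{Q^k(x)∖Q^{k+m}(x)} f dσ. Then for all x ∈ X and all m ≥ 1: T₁(f dσ)(x) ≤ T_m(f dσ)(x) ≤ C·m·T₁(f dσ)(x). -/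
open MeasureTheory Set Finset
open scoped ENNReal

/-! Cut the annulus `Q^k ∖ Q^{k+m}` into the `m` consecutive annuli `Q^i ∖ Q^{i+1}`,
`k ≤ i < k + m`. On each of them the growth condition trades `φ(Q^k)` for `C φ(Q^i)`, unless
`φ(Q^i) = 0`, in which case the annulus is empty. Summing over `k`, each annulus is counted at
most `m` times. -/

theorem ENNReal.tsum_int_sum_range_add (g : ℤ → ℝ≥0∞) (m : ℕ) :
    ∑' k : ℤ, ∑ i ∈ range m, g (k + i) = m * ∑' k : ℤ, g k := by
  rw [Summable.tsum_finsetSum fun _ _ => ENNReal.summable]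
  have shift (i : ℕ) : ∑' k : ℤ, g (k + i) = ∑' k : ℤ, g k := (Equiv.addRight (i : ℤ)).tsum_eq g
  simp only [shift, sum_const, card_range, nsmul_eq_mul]

section Annuli

variable {X : Type*} [MeasurableSpace X] (μ : Measure X) (f : X → ℝ≥0∞) (s : ℤ → Set X)

theorem lintegral_diff_le_sum_range (k : ℤ) (n : ℕ) :
    ∫⁻ y in s k \ s (k + n), f y ∂μ ≤
      ∑ i ∈ range n, ∫⁻ y in s (k + i) \ s (k + i + 1), f y ∂μ := by
  induction n with
  | zero => simp
  | succ n ih =>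
    rw [sum_range_succ, Nat.cast_succ, ← add_assoc]
    calc ∫⁻ y in s k \ s (k + n + 1), f y ∂μ
        ≤ ∫⁻ y in s k \ s (k + n) ∪ s (k + n) \ s (k + n + 1), f y ∂μ :=
          lintegral_mono_set (sdiff_triangle _ _ _)
      _ ≤ _ := (lintegral_union_le _ _ _).trans (add_le_add_left ih _)

variable {μ f s} {ψ : ℤ → ℝ≥0∞} {C : ℝ≥0∞}

theorem mul_lintegral_diff_le_sum_range
    (hgrowth : ∀ k l, k ≤ l → 0 < ψ l → ψ k ≤ C * ψ l)
    (hdegenerate : ∀ k, ψ k = 0 → s (k + 1) = s k) (k : ℤ) (n : ℕ) :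
    ψ k * ∫⁻ y in s k \ s (k + n), f y ∂μ ≤
      ∑ i ∈ range n, C * (ψ (k + i) * ∫⁻ y in s (k + i) \ s (k + i + 1), f y ∂μ) := by
  refine (mul_le_mul_right (lintegral_diff_le_sum_range μ f s k n) _).trans ?_
  rw [mul_sum]
  refine sum_le_sum fun i _ => ?_
  rcases eq_zero_or_pos (ψ (k + i)) with hzero | hpos
  · simp [hdegenerate _ hzero]
  · rw [← mul_assoc]
    exact mul_le_mul_left (hgrowth k _ (by omega) hpos) _

theorem tsum_mul_lintegral_diff_le_mul_tsum_succ
    (hgrowth : ∀ k l, k ≤ l → 0 < ψ l → ψ k ≤ C * ψ l)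
    (hdegenerate : ∀ k, ψ k = 0 → s (k + 1) = s k) (m : ℕ) :
    ∑' k : ℤ, ψ k * ∫⁻ y in s k \ s (k + m), f y ∂μ ≤
      C * m * ∑' k : ℤ, ψ k * ∫⁻ y in s k \ s (k + 1), f y ∂μ := by
  calc ∑' k : ℤ, ψ k * ∫⁻ y in s k \ s (k + m), f y ∂μ
      ≤ ∑' k : ℤ, ∑ i ∈ range m,
          C * (ψ (k + i) * ∫⁻ y in s (k + i) \ s (k + i + 1), f y ∂μ) :=
        ENNReal.tsum_le_tsum (mul_lintegral_diff_le_sum_range hgrowth hdegenerate · m)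
    _ = C * m * ∑' k : ℤ, ψ k * ∫⁻ y in s k \ s (k + 1), f y ∂μ := by
        rw [ENNReal.tsum_int_sum_range_add (fun k => C * (ψ k * ∫⁻ y in s k \ s (k + 1), f y ∂μ)),
          ENNReal.tsum_mul_left]
        ring

theorem tsum_mul_lintegral_diff_succ_le_tsum (hs : ∀ k, s (k + 1) ⊆ s k) {m : ℕ} (hm : 1 ≤ m) :
    ∑' k : ℤ, ψ k * ∫⁻ y in s k \ s (k + 1), f y ∂μ ≤
      ∑' k : ℤ, ψ k * ∫⁻ y in s k \ s (k + m), f y ∂μ :=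
  ENNReal.tsum_le_tsum fun k => mul_le_mul_right (lintegral_mono_set
    (sdiff_subset_sdiff_right (antitone_int_of_succ_le hs (by omega)))) _

end Annuli

theorem stmt9_general {X : Type*} [MeasurableSpace X] (σ : Measure X)
    (Q : ℤ → X → Set X)
    (hnested : ∀ k x, Q (k + 1) x ⊆ Q k x)
    (φ : Set X → ℝ≥0∞) (C : ℝ≥0∞)
    (hgrowth : ∀ (x : X) (k l : ℤ), k ≤ l → 0 < φ (Q l x) →
      φ (Q k x) ≤ C * φ (Q l x))
    (hdegenerate : ∀ (x : X) (k : ℤ), φ (Q k x) = 0 → Q (k + 1) x = Q k x)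
    (f : X → ℝ≥0∞) :
    ∀ (x : X) (m : ℕ), 1 ≤ m →
      (∑' k : ℤ, φ (Q k x) * ∫⁻ y in Q k x \ Q (k + 1) x, f y ∂σ)
        ≤ (∑' k : ℤ, φ (Q k x) * ∫⁻ y in Q k x \ Q (k + (m : ℤ)) x, f y ∂σ) ∧
      (∑' k : ℤ, φ (Q k x) * ∫⁻ y in Q k x \ Q (k + (m : ℤ)) x, f y ∂σ)
        ≤ C * (m : ℝ≥0∞) *
          (∑' k : ℤ, φ (Q k x) * ∫⁻ y in Q k x \ Q (k + 1) x, f y ∂σ) := fun x m hm =>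
  ⟨tsum_mul_lintegral_diff_succ_le_tsum (fun k => hnested k x) hm,
    tsum_mul_lintegral_diff_le_mul_tsum_succ (hgrowth x) (hdegenerate x) m⟩

/-- Lemma 3.7 (atom-free part): equivalence of the dyadic model operator and
its truncated modifications T_m. -/
theorem stmt9 {X : Type*} [MeasurableSpace X] (σ : Measure X)
    (Q : ℤ → X → Set X)
    (hmem : ∀ k x, x ∈ Q k x)
    (hnested : ∀ k x, Q (k + 1) x ⊆ Q k x)
    (φ : Set X → ℝ≥0∞) (C : ℝ≥0∞) (hC : 1 ≤ C) (hCfin : C < ∞)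
    (hgrowth : ∀ (x : X) (k l : ℤ), k ≤ l → 0 < φ (Q l x) →
      φ (Q k x) ≤ C * φ (Q l x))
    (hdegenerate : ∀ (x : X) (k : ℤ), φ (Q k x) = 0 → Q (k + 1) x = Q k x)
    (f : X → ℝ≥0∞) :
    ∀ (x : X) (m : ℕ), 1 ≤ m →
      (∑' k : ℤ, φ (Q k x) * ∫⁻ y in Q k x \ Q (k + 1) x, f y ∂σ)
        ≤ (∑' k : ℤ, φ (Q k x) * ∫⁻ y in Q k x \ Q (k + (m : ℤ)) x, f y ∂σ) ∧
      (∑' k : ℤ, φ (Q k x) * ∫⁻ y in Q k x \ Q (k + (m : ℤ)) x, f y ∂σ)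
        ≤ C * (m : ℝ≥0∞) *
          (∑' k : ℤ, φ (Q k x) * ∫⁻ y in Q k x \ Q (k + 1) x, f y ∂σ) :=
  stmt9_general σ Q hnested φ C hgrowth hdegenerate f
end

section
/- Let σ be a σ-finite measure, 𝒟 a dyadic system, and ℛ ⊆ 𝒟 a collection of dyadic cubes such that: (a) no cube appears twice in ℛ, and (b) for R₁, R₂ ∈ ℛ with R₁ ⊊ R₂ one has ⟨f⟩^σ_{R₁} > 2⟨f⟩^σ_{R₂}, where ⟨f⟩^σ_R = σ(R)⁻¹∫_R |f| dσ. Then for all x ∈ X and 1 < p < ∞: Σ_{R∈ℛ} (⟨f⟩^σ_R)^p χ_R(x) ≤ 2 (M_σ f(x))^p, where M_σ f(x) = sup_{Q∈𝒟, x∈Q} ⟨f⟩^σ_Q is the dyadic maximal function. -/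
open MeasureTheory Set
open scoped ENNReal NNReal

/-!
Fix `x` and let `M` be the dyadic maximal function at `x`. The cubes of `ℛ` containing `x`
form a chain along which averages more than double, so every such cube `R` with nonzero
average has its own scale `n(R)`, the `n` with `2ⁿ ⟨f⟩_R ≤ M < 2ⁿ⁺¹ ⟨f⟩_R`, and distinct cubes
have distinct scales. Hence the sum is at most `∑ₙ (2⁻ⁿ M)ᵖ ≤ 2 Mᵖ`.
-/

lemma exists_two_pow_mul_le_lt {a M : ℝ≥0∞} (ha : a ≠ 0) (haM : a ≤ M) (hM : M ≠ ⊤) :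
    ∃ n : ℕ, 2 ^ n * a ≤ M ∧ M < 2 ^ (n + 1) * a := by
  lift M to ℝ≥0 using hM
  lift a to ℝ≥0 using ne_top_of_le_ne_top ENNReal.coe_ne_top haM
  have ha₀ : 0 < a := pos_iff_ne_zero.2 (by exact_mod_cast ha)
  obtain ⟨n, hle, hlt⟩ := exists_nat_pow_near (x := M / a) (y := 2)
    ((one_le_div ha₀).2 (by exact_mod_cast haM)) one_lt_two
  refine ⟨n, ?_, ?_⟩
  · exact_mod_cast (le_div_iff₀ ha₀).1 hle
  · exact_mod_cast (div_lt_iff₀ ha₀).1 hlt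

lemma tsum_rpow_inv_two_pow_mul_le (M : ℝ≥0∞) {p : ℝ} (hp : 1 ≤ p) :
    ∑' k : ℕ, ((2 : ℝ≥0∞)⁻¹ ^ k * M) ^ p ≤ 2 * M ^ p := by
  have hp₀ : 0 ≤ p := zero_le_one.trans hp
  have hratio : (2 : ℝ≥0∞)⁻¹ ^ p ≤ 2⁻¹ := by
    simpa using ENNReal.rpow_le_rpow_of_exponent_ge (ENNReal.inv_le_one.2 one_le_two) hp
  have hsum : (1 - (2 : ℝ≥0∞)⁻¹ ^ p)⁻¹ ≤ 2 := by
    calc (1 - (2 : ℝ≥0∞)⁻¹ ^ p)⁻¹ ≤ (1 - 2⁻¹)⁻¹ := by gcongr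
      _ = 2 := by rw [ENNReal.one_sub_inv_two, inv_inv]
  calc ∑' k : ℕ, ((2 : ℝ≥0∞)⁻¹ ^ k * M) ^ p
        = ∑' k : ℕ, ((2 : ℝ≥0∞)⁻¹ ^ p) ^ k * M ^ p := by
        refine tsum_congr fun k => ?_
        rw [ENNReal.mul_rpow_of_nonneg _ _ hp₀, ← ENNReal.rpow_natCast, ← ENNReal.rpow_mul,
          mul_comm (k : ℝ) p, ENNReal.rpow_mul, ENNReal.rpow_natCast]
    _ = (1 - (2 : ℝ≥0∞)⁻¹ ^ p)⁻¹ * M ^ p := by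
        rw [ENNReal.tsum_mul_right, ENNReal.tsum_geometric]
    _ ≤ 2 * M ^ p := by gcongr

lemma tsum_rpow_le_two_mul_rpow_of_pairwise {ι : Type*} {a : ι → ℝ≥0∞} {M : ℝ≥0∞}
    (haM : ∀ i, a i ≤ M) (hsep : Pairwise fun i j => 2 * a i < a j ∨ 2 * a j < a i)
    {p : ℝ} (hp : 1 ≤ p) : ∑' i, a i ^ p ≤ 2 * M ^ p := by
  have hp₀ : 0 < p := zero_lt_one.trans_le hp
  rcases eq_or_ne M ⊤ with rfl | hM
  · simp [ENNReal.top_rpow_of_pos hp₀]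
  have hscale (i : Function.support a) := exists_two_pow_mul_le_lt i.2 (haM i) hM
  choose n hn_le hn_lt using hscale
  have hn_inj : Function.Injective n := by
    intro i j hij
    by_contra hne
    have hscale_ne (i j : Function.support a) (hij : n i = n j) (hlt : 2 * a i < a j) : False :=
      (hn_lt i).not_ge <| calc
        2 ^ (n i + 1) * a i = 2 ^ n j * (2 * a i) := by rw [hij, pow_succ, mul_assoc]
        _ ≤ 2 ^ n j * a j := by gcongr
        _ ≤ M := hn_le j
    rcases hsep (Subtype.coe_injective.ne hne) with h | h
    · exact hscale_ne i j hij h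
    · exact hscale_ne j i hij.symm h
  have hbound (i : Function.support a) : a i ≤ (2 : ℝ≥0∞)⁻¹ ^ n i * M := by
    rw [← ENNReal.inv_pow, ← ENNReal.mul_le_iff_le_inv (by simp) (by simp)]
    exact hn_le i
  calc ∑' i, a i ^ p = ∑' i : Function.support a, a i ^ p := by
        refine (tsum_subtype_eq_of_support_subset fun i hi => ?_).symm
        contrapose! hi
        simp [Function.notMem_support.1 hi, ENNReal.zero_rpow_of_pos hp₀]
    _ ≤ ∑' i : Function.support a, ((2 : ℝ≥0∞)⁻¹ ^ n i * M) ^ p := by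
        gcongr with i
        exact hbound i
    _ ≤ ∑' k : ℕ, ((2 : ℝ≥0∞)⁻¹ ^ k * M) ^ p :=
        ENNReal.tsum_comp_le_tsum_of_injective hn_inj (fun k => ((2 : ℝ≥0∞)⁻¹ ^ k * M) ^ p)
    _ ≤ 2 * M ^ p := tsum_rpow_inv_two_pow_mul_le M hp

lemma ssubset_or_ssubset_of_mem_inter {X : Type*} {s t : Set X} {x : X}
    (h : s ⊆ t ∨ t ⊆ s ∨ s ∩ t = ∅) (hne : s ≠ t) (hx : x ∈ s ∩ t) : s ⊂ t ∨ t ⊂ s := by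
  rcases h with h | h | h
  · exact Or.inl (h.ssubset_of_ne hne)
  · exact Or.inr (h.ssubset_of_ne hne.symm)
  · exact absurd (h ▸ hx) (notMem_empty x)

theorem stmt11_general {X : Type*} [MeasurableSpace X] (σ : Measure X)
    (𝒟 : Set (Set X)) (ℛ : Set (Set X)) (hℛ : ℛ ⊆ 𝒟)
    (f : X → ℝ≥0∞)
    (hnested : ∀ R₁ ∈ ℛ, ∀ R₂ ∈ ℛ, R₁ ⊆ R₂ ∨ R₂ ⊆ R₁ ∨ R₁ ∩ R₂ = ∅)
    (hdouble : ∀ R₁ ∈ ℛ, ∀ R₂ ∈ ℛ, R₁ ⊂ R₂ →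
      2 * ((∫⁻ y in R₂, f y ∂σ) / σ R₂) < (∫⁻ y in R₁, f y ∂σ) / σ R₁)
    (p : ℝ) (hp : 1 < p) :
    ∀ x : X,
      (∑' R : ℛ, ((∫⁻ y in (R : Set X), f y ∂σ) / σ (R : Set X)) ^ p *
          (R : Set X).indicator (1 : X → ℝ≥0∞) x)
        ≤ 2 * (⨆ Q ∈ 𝒟, ⨆ (_ : x ∈ Q), (∫⁻ y in Q, f y ∂σ) / σ Q) ^ p := by
  intro x
  set avg : Set X → ℝ≥0∞ := fun R => (∫⁻ y in R, f y ∂σ) / σ R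
  let ℛx : Set ℛ := {R | x ∈ (R : Set X)}
  have hsum : (∑' R : ℛ, avg R ^ p * (R : Set X).indicator 1 x) = ∑' R : ℛx, avg R ^ p := by
    rw [tsum_subtype ℛx fun R => avg R ^ p]
    refine tsum_congr fun R => ?_
    by_cases hx : x ∈ (R : Set X) <;> simp [ℛx, hx]
  rw [hsum]
  refine tsum_rpow_le_two_mul_rpow_of_pairwise (fun R => ?_) (fun R₁ R₂ hne => ?_) hp.le
  · exact le_iSup₂_of_le (R : Set X) (hℛ R.1.2) (le_iSup_of_le R.2 le_rfl)
  · have hne' : (R₁ : Set X) ≠ R₂ := fun h => hne (Subtype.ext (Subtype.ext h))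
    rcases ssubset_or_ssubset_of_mem_inter (hnested _ R₁.1.2 _ R₂.1.2) hne' ⟨R₁.2, R₂.2⟩
      with h | h
    · exact Or.inr (hdouble _ R₁.1.2 _ R₂.1.2 h)
    · exact Or.inl (hdouble _ R₂.1.2 _ R₁.1.2 h)

/-- Lemma 6.9: for a sparse collection ℛ of dyadic cubes (averages at least
double along strict inclusions), the sum of p-th powers of averages is
pointwise controlled by twice the p-th power of the dyadic maximal function. -/
theorem stmt11 {X : Type*} [MeasurableSpace X] (σ : Measure X)
    (𝒟 : Set (Set X)) (ℛ : Set (Set X)) (hℛ : ℛ ⊆ 𝒟)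
    (f : X → ℝ≥0∞)
    (hnested : ∀ R₁ ∈ ℛ, ∀ R₂ ∈ ℛ, R₁ ⊆ R₂ ∨ R₂ ⊆ R₁ ∨ R₁ ∩ R₂ = ∅)
    (htop : ∀ x : X, {R | R ∈ ℛ ∧ x ∈ R}.Nonempty →
      ∃ R₀ ∈ ℛ, x ∈ R₀ ∧ ∀ R ∈ ℛ, x ∈ R → R ⊆ R₀)
    (hdouble : ∀ R₁ ∈ ℛ, ∀ R₂ ∈ ℛ, R₁ ⊂ R₂ →
      2 * ((∫⁻ y in R₂, f y ∂σ) / σ R₂) < (∫⁻ y in R₁, f y ∂σ) / σ R₁)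
    (p : ℝ) (hp : 1 < p) :
    ∀ x : X,
      (∑' R : ℛ, ((∫⁻ y in (R : Set X), f y ∂σ) / σ (R : Set X)) ^ p *
          (R : Set X).indicator (1 : X → ℝ≥0∞) x)
        ≤ 2 * (⨆ Q ∈ 𝒟, ⨆ (_ : x ∈ Q), (∫⁻ y in Q, f y ∂σ) / σ Q) ^ p :=
  stmt11_general σ 𝒟 ℛ hℛ f hnested hdouble p hp
end

section
/- Let σ be a σ-finite measure and 𝒟 a dyadic system whose cubes have generations bounded below (so there exist maximal cubes). Define the principal cubes 𝒫 = ⋃_{j≥0} 𝒫_j where 𝒫₀ consists of all maximal cubes and 𝒫_{j+1} = ⋃_{P∈𝒫_j}{R ⊊ P : R maximal with ⟨f⟩^σ_R > 2⟨f⟩^σ_P}. For Q ∈ 𝒟 let Π(Q) denote the minimal P ∈ 𝒫 containing Q. Then: (i) for P₁, P₂ ∈ 𝒫 with P₁ ⊊ P₂ one has ⟨f⟩^σ_{P₁} > 2⟨f⟩^σ_{P₂}; (ii) for every Q ∈ 𝒟, ⟨f⟩^σ_Q ≤ 2⟨f⟩^σ_{Π(Q)}. -/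
open MeasureTheory Set
open scoped ENNReal

/-!
Part (i) is proved by strong induction on the sum of the generations of `P₁ ⊊ P₂`. Let `P` be the
stopping parent of `P₁`. As `A P₁ > 0` forces `P₁ ≠ ∅`, the nested cubes `P` and `P₂` are
comparable. If `P ⊆ P₂`, the induction hypothesis gives `A P₂ ≤ A P < A P₁ / 2`. The case
`P₂ ⊊ P` is impossible: `P₂` has a parent `P''` comparable with `P`, and comparing `P` with `P''`
by the induction hypothesis, either `P₂` would violate the maximality of `P₁` as a stopping cube
of `P`, or `P` would violate the maximality of `P₂` as a stopping cube of `P''`.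

Part (ii): if `2 A (Π Q) < A Q`, a maximal cube between `Q` and `Π Q` with the same property is a
principal cube strictly inside `Π Q` containing `Q`, contradicting the minimality of `Π Q`.
-/

namespace PrincipalCubes

variable {X : Type*} {𝒟 : Set (Set X)} {A : Set X → ℝ≥0∞} {P Q R S : Set X}

structure IsStoppingChild (𝒟 : Set (Set X)) (A : Set X → ℝ≥0∞) (P R : Set X) : Prop where
  ssubset : R ⊂ P
  two_mul_lt : 2 * A P < A R
  eq_of_two_mul_lt : ∀ R' ∈ 𝒟, R ⊆ R' → R' ⊂ P → 2 * A P < A R' → R' = R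

theorem isStoppingChild_iff : IsStoppingChild 𝒟 A P R ↔
    R ⊂ P ∧ 2 * A P < A R ∧ ∀ R' ∈ 𝒟, R ⊆ R' → R' ⊂ P → 2 * A P < A R' → R' = R :=
  ⟨fun ⟨h₁, h₂, h₃⟩ => ⟨h₁, h₂, h₃⟩, fun ⟨h₁, h₂, h₃⟩ => ⟨h₁, h₂, h₃⟩⟩

theorem IsStoppingChild.nonempty (h : IsStoppingChild 𝒟 A P R) (hA : A ∅ = 0) : R.Nonempty := by
  rw [nonempty_iff_ne_empty]
  rintro rfl
  simpa [hA] using h.two_mul_lt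

theorem le_two_mul (a : ℝ≥0∞) : a ≤ 2 * a :=
  le_mul_of_one_le_left zero_le one_le_two

theorem ssubset_or_eq_or_ssubset_of_nested
    (hnested : ∀ Q ∈ 𝒟, ∀ R ∈ 𝒟, Q ⊆ R ∨ R ⊆ Q ∨ Q ∩ R = ∅) (hQ : Q ∈ 𝒟) (hR : R ∈ 𝒟)
    (hS : S.Nonempty) (hSQ : S ⊆ Q) (hSR : S ⊆ R) : Q ⊂ R ∨ Q = R ∨ R ⊂ Q := by
  obtain ⟨x, hx⟩ := hS
  rcases hnested Q hQ R hR with h | h | h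
  · exact h.ssubset_or_eq.imp_right Or.inl
  · exact Or.inr (h.ssubset_or_eq.symm.imp Eq.symm id)
  · exact absurd (h ▸ ⟨hSQ hx, hSR hx⟩ : x ∈ (∅ : Set X)) (notMem_empty x)

theorem exists_isStoppingChild_of_two_mul_lt (hfin : {R | R ∈ 𝒟 ∧ Q ⊆ R}.Finite) (hQ : Q ∈ 𝒟)
    (hQP : Q ⊂ P) (h : 2 * A P < A Q) : ∃ R ∈ 𝒟, Q ⊆ R ∧ IsStoppingChild 𝒟 A P R := by
  let s := {R | R ∈ 𝒟 ∧ Q ⊆ R ∧ R ⊂ P ∧ 2 * A P < A R}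
  obtain ⟨R, ⟨hR, hQR, hRP, hRA⟩, hmax⟩ :=
    (hfin.subset fun R hR => ⟨hR.1, hR.2.1⟩ : s.Finite).exists_maximal ⟨Q, hQ, subset_rfl, hQP, h⟩
  exact ⟨R, hR, hQR, hRP, hRA, fun R' hR' hRR' hR'P hR'A =>
    (hmax ⟨hR', hQR.trans hRR', hR'P, hR'A⟩ hRR').antisymm hRR'⟩

variable {Pcol : ℕ → Set (Set X)}

theorem two_mul_lt_of_ssubset (hA : A ∅ = 0)
    (hnested : ∀ Q ∈ 𝒟, ∀ R ∈ 𝒟, Q ⊆ R ∨ R ⊆ Q ∨ Q ∩ R = ∅) (hD : ∀ j, Pcol j ⊆ 𝒟)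
    (hmax : ∀ P ∈ Pcol 0, ∀ R ∈ 𝒟, P ⊆ R → P = R)
    (hparent : ∀ j, ∀ R ∈ Pcol (j + 1), ∃ P ∈ Pcol j, IsStoppingChild 𝒟 A P R)
    {j k : ℕ} {P₁ P₂ : Set X} (h₁ : P₁ ∈ Pcol j) (h₂ : P₂ ∈ Pcol k) (h : P₁ ⊂ P₂) :
    2 * A P₂ < A P₁ := by
  induction hn : j + k using Nat.strong_induction_on generalizing j k P₁ P₂ with
  | _ n ih =>
  have ih' {a b : ℕ} {U V : Set X} (hab : a + b < n) (hU : U ∈ Pcol a) (hV : V ∈ Pcol b)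
      (hUV : U ⊂ V) : 2 * A V < A U := ih _ hab hU hV hUV rfl
  obtain _ | j := j
  · exact absurd (hmax P₁ h₁ P₂ (hD k h₂) h.subset) h.ne
  obtain ⟨P, hP, hP₁⟩ := hparent j P₁ h₁
  have hne := hP₁.nonempty hA
  rcases ssubset_or_eq_or_ssubset_of_nested hnested (hD j hP) (hD k h₂) hne
    hP₁.ssubset.subset h.subset with hPP₂ | rfl | hP₂P
  · calc 2 * A P₂ ≤ 2 * A P := by gcongr; exact (le_two_mul _).trans (ih' (by omega) hP h₂ hPP₂).le
      _ < A P₁ := hP₁.two_mul_lt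
  · exact hP₁.two_mul_lt
  exfalso
  obtain _ | k := k
  · exact hP₂P.ne (hmax P₂ h₂ P (hD j hP) hP₂P.subset)
  obtain ⟨P'', hP'', hP₂⟩ := hparent k P₂ h₂
  have hP₂A : ¬ 2 * A P < A P₂ := fun hlt =>
    h.ne' (hP₁.eq_of_two_mul_lt P₂ (hD _ h₂) h.subset hP₂P hlt)
  rcases ssubset_or_eq_or_ssubset_of_nested hnested (hD j hP) (hD k hP'') (hne.mono h.subset)
    hP₂P.subset hP₂.ssubset.subset with hPP'' | rfl | hP''P
  · exact hP₂P.ne (hP₂.eq_of_two_mul_lt P (hD j hP) hP₂P.subset hPP''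
      (ih' (by omega) hP hP'' hPP'')).symm
  · exact hP₂A hP₂.two_mul_lt
  · exact hP₂A (((ih' (by omega) hP'' hP hP''P).trans_le (le_two_mul _)).trans hP₂.two_mul_lt)

theorem le_two_mul_of_minimal (hfin : {R | R ∈ 𝒟 ∧ Q ⊆ R}.Finite) (hQ : Q ∈ 𝒟)
    (hchild : ∀ j, ∀ P ∈ Pcol j, ∀ R ∈ 𝒟, IsStoppingChild 𝒟 A P R → R ∈ Pcol (j + 1))
    {j : ℕ} (hP : P ∈ Pcol j) (hQP : Q ⊆ P) (hmin : ∀ P' ∈ ⋃ j, Pcol j, Q ⊆ P' → P ⊆ P') :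
    A Q ≤ 2 * A P := by
  by_contra! hlt
  have hQP' : Q ⊂ P := hQP.ssubset_of_ne fun hQP => (hQP ▸ hlt).not_ge (le_two_mul _)
  obtain ⟨R, hR, hQR, hRP⟩ := exists_isStoppingChild_of_two_mul_lt hfin hQ hQP' hlt
  exact hRP.ssubset.not_subset (hmin R (mem_iUnion.2 ⟨j + 1, hchild j P hP R hR hRP⟩) hQR)

end PrincipalCubes

open PrincipalCubes in
/-- Properties of principal cubes (Remark 6.8): averages strictly double
along strict inclusions of principal cubes, and every dyadic cube has average
at most twice that of its minimal principal cube. -/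
theorem stmt13 {X : Type*} [MeasurableSpace X] (σ : Measure X)
    (𝒟 : Set (Set X))
    (hnested : ∀ Q ∈ 𝒟, ∀ R ∈ 𝒟, Q ⊆ R ∨ R ⊆ Q ∨ Q ∩ R = ∅)
    (hfin : ∀ Q ∈ 𝒟, {R | R ∈ 𝒟 ∧ Q ⊆ R}.Finite)
    (f : X → ℝ≥0∞)
    (A : Set X → ℝ≥0∞) (hA : ∀ R, A R = (∫⁻ y in R, f y ∂σ) / σ R)
    (Pcol : ℕ → Set (Set X))
    (hPcol0 : Pcol 0 = {Q | Q ∈ 𝒟 ∧ ∀ R ∈ 𝒟, Q ⊆ R → Q = R})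
    (hPcolsucc : ∀ j, Pcol (j + 1) = {R | R ∈ 𝒟 ∧ ∃ P ∈ Pcol j, R ⊂ P ∧
        2 * A P < A R ∧
        ∀ R' ∈ 𝒟, R ⊆ R' → R' ⊂ P → 2 * A P < A R' → R' = R})
    (PiQ : Set X → Set X)
    (hPi : ∀ Q ∈ 𝒟, PiQ Q ∈ (⋃ j, Pcol j) ∧ Q ⊆ PiQ Q ∧
        ∀ P ∈ (⋃ j, Pcol j), Q ⊆ P → PiQ Q ⊆ P) :
    (∀ P₁ ∈ (⋃ j, Pcol j), ∀ P₂ ∈ (⋃ j, Pcol j), P₁ ⊂ P₂ → 2 * A P₂ < A P₁) ∧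
    (∀ Q ∈ 𝒟, A Q ≤ 2 * A (PiQ Q)) := by
  have hsucc (j : ℕ) (R : Set X) :
      R ∈ Pcol (j + 1) ↔ R ∈ 𝒟 ∧ ∃ P ∈ Pcol j, IsStoppingChild 𝒟 A P R := by
    simp only [hPcolsucc, isStoppingChild_iff, mem_ofPred_eq]
  have hD : ∀ j, Pcol j ⊆ 𝒟
    | 0, _, hP => (hPcol0 ▸ hP).1
    | j + 1, _, hP => ((hsucc j _).1 hP).1
  have hA₀ : A ∅ = 0 := by simp [hA]
  refine ⟨?_, fun Q hQ => ?_⟩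
  · simp only [mem_iUnion]
    rintro P₁ ⟨j, h₁⟩ P₂ ⟨k, h₂⟩ h
    exact two_mul_lt_of_ssubset hA₀ hnested hD (fun P hP => (hPcol0 ▸ hP).2)
      (fun j R hR => ((hsucc j R).1 hR).2) h₁ h₂ h
  · obtain ⟨hPrin, hQPi, hmin⟩ := hPi Q hQ
    obtain ⟨j, hj⟩ := mem_iUnion.1 hPrin
    exact le_two_mul_of_minimal (hfin Q hQ) hQ
      (fun j P hP R hR hRP => (hsucc j R).2 ⟨hR, P, hP, hRP⟩) hj hQPi hmin
end
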